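/- (Lyapunov decrease for the rigid-body attitude tracking controller.) Let P ∈ ℝ^{3×3} be symmetric, J ∈ ℝ^{3×3} be symmetric, and k_R, k_ω > 0. Let R_e : ℝ → SO(3) and e_ω : ℝ → ℝ³ be differentiable and satisfy the closed-loop rigid-body error dynamics Ṙ_e(t) = R_e(t) ê_ω(t) and J ė_ω(t) = −k_R e_R(R_e(t)) − k_ω e_ω(t), where e_R(R) = vee(½(PR − RᵀP)). Then the function V₁(t) = k_R ψ(R_e(t)) + ½ e_ω(t)ᵀ J e_ω(t), with ψ(R) = ½ tr(P(I − R)), satisfies dV₁/dt = −k_ω ‖e_ω(t)‖² for all t. -/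

import Mathlib

/-! Along `Ṙ = R ŵ` the configuration error changes at rate `−½ tr(P R ŵ) = e_R · w`, since
`tr(A ŵ) = −vee(A − Aᵀ) · w` and `(PR)ᵀ = RᵀP` for symmetric `P`. For symmetric `J` the kinetic
term changes at rate `e_ω · J ė_ω`; inserting the dynamics, the two `k_R e_R · e_ω` terms cancel. -/

open Matrix

attribute [local instance] Matrix.normedAddCommGroup Matrix.normedSpace

/-- The hat map sending `v ∈ ℝ³` to the skew-symmetric matrix `v̂` with `v̂ w = v × w`. -/
def hat (v : Fin 3 → ℝ) : Matrix (Fin 3) (Fin 3) ℝ :=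
  !![0, -v 2, v 1; v 2, 0, -v 0; -v 1, v 0, 0]

/-- `SO(3)`: real 3×3 matrices with `RᵀR = I` and `det R = 1`. -/
def SO3 : Set (Matrix (Fin 3) (Fin 3) ℝ) := {R | Rᵀ * R = 1 ∧ R.det = 1}

/-- The vee map, inverse of the hat map on skew-symmetric matrices. -/
def vee (A : Matrix (Fin 3) (Fin 3) ℝ) : Fin 3 → ℝ :=
  ![A 2 1, A 0 2, A 1 0]

/-- The configuration error function `ψ(R) = ½ tr(P(I − R))`. -/
noncomputable def ψ (P R : Matrix (Fin 3) (Fin 3) ℝ) : ℝ :=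
  (1 / 2 : ℝ) * (P * (1 - R)).trace

/-- The attitude error vector `e_R(R) = vee(½(PR − RᵀP))`. -/
noncomputable def eR (P R : Matrix (Fin 3) (Fin 3) ℝ) : Fin 3 → ℝ :=
  vee ((1 / 2 : ℝ) • (P * R - Rᵀ * P))

section Calculus

variable {n : Type*} [Fintype n] {t : ℝ}

theorem HasDerivAt.dotProduct {f g : ℝ → n → ℝ} {f' g' : n → ℝ}
    (hf : HasDerivAt f f' t) (hg : HasDerivAt g g' t) :
    HasDerivAt (fun s => f s ⬝ᵥ g s) (f' ⬝ᵥ g t + f t ⬝ᵥ g') t := by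
  rw [hasDerivAt_pi] at hf hg
  have h := HasDerivAt.fun_sum (u := Finset.univ) fun i _ => (hf i).fun_mul (hg i)
  rwa [Finset.sum_add_distrib] at h

theorem HasDerivAt.const_mulVec {f : ℝ → n → ℝ} {f' : n → ℝ} (J : Matrix n n ℝ)
    (hf : HasDerivAt f f' t) : HasDerivAt (fun s => J *ᵥ f s) (J *ᵥ f') t :=
  (Matrix.mulVecLin J).toContinuousLinearMap.hasFDerivAt.comp_hasDerivAt t hf

theorem HasDerivAt.trace_const_mul {R : ℝ → Matrix n n ℝ} {R' : Matrix n n ℝ}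
    (P : Matrix n n ℝ) (hR : HasDerivAt R R' t) :
    HasDerivAt (fun s => (P * R s).trace) ((P * R').trace) t :=
  ((Matrix.traceLinearMap n ℝ ℝ).comp (LinearMap.mulLeft ℝ P)).toContinuousLinearMap
    |>.hasFDerivAt.comp_hasDerivAt t hR

theorem Matrix.IsSymm.dotProduct_mulVec_comm {J : Matrix n n ℝ} (hJ : J.IsSymm)
    (v w : n → ℝ) : v ⬝ᵥ J *ᵥ w = w ⬝ᵥ J *ᵥ v := by
  rw [dotProduct_mulVec, ← mulVec_transpose, hJ.eq, dotProduct_comm]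

theorem HasDerivAt.dotProduct_mulVec_self {f : ℝ → n → ℝ} {f' : n → ℝ} {J : Matrix n n ℝ}
    (hJ : J.IsSymm) (hf : HasDerivAt f f' t) :
    HasDerivAt (fun s => f s ⬝ᵥ J *ᵥ f s) (2 * (f t ⬝ᵥ J *ᵥ f')) t := by
  convert hf.dotProduct (hf.const_mulVec J) using 1
  rw [hJ.dotProduct_mulVec_comm]
  ring

end Calculus

theorem vee_smul (c : ℝ) (A : Matrix (Fin 3) (Fin 3) ℝ) : vee (c • A) = c • vee A := by
  ext i; fin_cases i <;> rfl

theorem trace_mul_hat (A : Matrix (Fin 3) (Fin 3) ℝ) (w : Fin 3 → ℝ) :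
    (A * hat w).trace = -(vee (A - Aᵀ) ⬝ᵥ w) := by
  simp only [hat, vee, trace_fin_three, dotProduct, Fin.sum_univ_three, Matrix.mul_apply,
    Matrix.sub_apply, transpose_apply, of_apply, cons_val', cons_val_zero, cons_val_one, cons_val,
    cons_val_fin_one]
  ring

theorem trace_mul_mul_hat {P : Matrix (Fin 3) (Fin 3) ℝ} (hP : P.IsSymm)
    (R : Matrix (Fin 3) (Fin 3) ℝ) (w : Fin 3 → ℝ) :
    (P * (R * hat w)).trace = -(2 * (eR P R ⬝ᵥ w)) := by
  rw [← Matrix.mul_assoc, trace_mul_hat, eR, vee_smul, Matrix.transpose_mul, hP.eq,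
    smul_dotProduct, smul_eq_mul]
  ring

theorem hasDerivAt_ψ {P : Matrix (Fin 3) (Fin 3) ℝ} (hP : P.IsSymm)
    {R : ℝ → Matrix (Fin 3) (Fin 3) ℝ} {w : Fin 3 → ℝ} {t : ℝ}
    (hR : HasDerivAt R (R t * hat w) t) :
    HasDerivAt (fun s => ψ P (R s)) (eR P (R t) ⬝ᵥ w) t := by
  have hψ : (fun s => ψ P (R s)) = fun s => (1 / 2 : ℝ) * (P.trace - (P * R s).trace) := by
    ext s; simp only [ψ, Matrix.mul_sub, Matrix.mul_one, Matrix.trace_sub]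
  rw [hψ]
  refine (((hR.trace_const_mul P).const_sub P.trace).const_mul (1 / 2 : ℝ)).congr_deriv ?_
  rw [trace_mul_mul_hat hP]
  ring

theorem lyapunov_decrease_rigid_body_general
    (P J : Matrix (Fin 3) (Fin 3) ℝ) (hPsymm : P.IsSymm) (hJsymm : J.IsSymm)
    (kR kω : ℝ)
    (Re : ℝ → Matrix (Fin 3) (Fin 3) ℝ) (eω eω' : ℝ → Fin 3 → ℝ)
    (hRe : ∀ t, HasDerivAt Re (Re t * hat (eω t)) t)
    (heω : ∀ t, HasDerivAt eω (eω' t) t)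
    (hdyn : ∀ t, J *ᵥ eω' t = -(kR • eR P (Re t)) - kω • eω t) :
    ∀ t, HasDerivAt (fun s => kR * ψ P (Re s) + (1 / 2 : ℝ) * (eω s ⬝ᵥ (J *ᵥ eω s)))
      (-(kω * (eω t ⬝ᵥ eω t))) t := by
  intro t
  refine (((hasDerivAt_ψ hPsymm (hRe t)).const_mul kR).add
    (((heω t).dotProduct_mulVec_self hJsymm).const_mul (1 / 2 : ℝ))).congr_deriv ?_
  rw [hdyn t, dotProduct_sub, dotProduct_neg, dotProduct_smul, dotProduct_smul,
    dotProduct_comm (eω t) (eR P (Re t)), smul_eq_mul, smul_eq_mul]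
  ring

/-- Lyapunov decrease for the rigid-body attitude tracking controller: along the closed-loop
error dynamics `Ṙ_e = R_e ê_ω`, `J ė_ω = −k_R e_R(R_e) − k_ω e_ω`, the Lyapunov function
`V₁ = k_R ψ(R_e) + ½ e_ωᵀ J e_ω` satisfies `V̇₁ = −k_ω ‖e_ω‖²`. -/
theorem lyapunov_decrease_rigid_body
    (P J : Matrix (Fin 3) (Fin 3) ℝ) (hPsymm : P.IsSymm) (hJsymm : J.IsSymm)
    (kR kω : ℝ) (hkR : 0 < kR) (hkω : 0 < kω)
    (Re : ℝ → Matrix (Fin 3) (Fin 3) ℝ) (eω eω' : ℝ → Fin 3 → ℝ)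
    (hReSO3 : ∀ t, Re t ∈ SO3)
    (hRe : ∀ t, HasDerivAt Re (Re t * hat (eω t)) t)
    (heω : ∀ t, HasDerivAt eω (eω' t) t)
    (hdyn : ∀ t, J *ᵥ eω' t = -(kR • eR P (Re t)) - kω • eω t) :
    ∀ t, HasDerivAt (fun s => kR * ψ P (Re s) + (1 / 2 : ℝ) * (eω s ⬝ᵥ (J *ᵥ eω s)))
      (-(kω * (eω t ⬝ᵥ eω t))) t :=
  lyapunov_decrease_rigid_body_general P J hPsymm hJsymm kR kω Re eω eω' hRe heω hdyn
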